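/- arXiv:2212.12167 — 6 statements merged into one kernel-verified Lean document; each statement's English description precedes it below -/
import Mathlib

section
/- Residual-regression identity: for every bounded measurable g : 𝒱 → ℝ, under the treatment model and IV independence, E[(A − E[A|B])·g(V) | B] = Cov(α_z(V), g(V))·B + Cov(α_u(V), g(V)) almost surely. -/
open MeasureTheory ProbabilityTheory

/-- Covariance of two real random variables: `Cov(X,Z) = E[XZ] - E[X]·E[Z]`. -/
noncomputable def covE {Ω : Type*} [MeasurableSpace Ω] (μ : Measure Ω) (X Z : Ω → ℝ) : ℝ :=
  (∫ ω, X ω * Z ω ∂μ) - (∫ ω, X ω ∂μ) * (∫ ω, Z ω ∂μ)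

/-!
Condition on `(B, V)` first: there the treatment model gives
`E[A·g(V) | B, V] = B·(α_z g)(V) + (α_u g)(V)`. Conditioning down to `B`, the factor `B` pulls out
and, by independence of `B` and `V`, every function of `V` is replaced by its mean, so
`E[A·g(V) | B] = B·E[α_z g(V)] + E[α_u g(V)]`, and (for `g = 1`) `E[A | B] = B·E[α_z(V)] + E[α_u(V)]`.
As `E[E[A|B]·g(V) | B] = E[A|B]·E[g(V)]`, subtracting leaves the two covariances.
-/

section

variable {Ω 𝒱 : Type*} {mΩ : MeasurableSpace Ω} [MeasurableSpace 𝒱] {μ : Measure Ω}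

lemma memLp_top_comp_of_abs_le {f : 𝒱 → ℝ} (hf : Measurable f) {V : Ω → 𝒱} (hV : Measurable V)
    {C : ℝ} (hC : ∀ x, |f x| ≤ C) : MemLp (fun ω => f (V ω)) ⊤ μ :=
  memLp_top_of_bound (hf.comp hV).aestronglyMeasurable C (ae_of_all _ fun ω => hC (V ω))

lemma memLp_top_of_zero_or_one {X : Ω → ℝ} (hX : Measurable X) (h01 : ∀ ω, X ω = 0 ∨ X ω = 1) :
    MemLp X ⊤ μ :=
  memLp_top_of_bound hX.aestronglyMeasurable 1
    (ae_of_all _ fun ω => by rcases h01 ω with h | h <;> simp [h])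

lemma condExp_sub_condExp_mul [IsFiniteMeasure μ] {m : MeasurableSpace Ω} {A Y : Ω → ℝ}
    (hA : Integrable A μ) (hY : MemLp Y ⊤ μ) :
    μ[fun ω => (A ω - μ[A | m] ω) * Y ω | m]
      =ᵐ[μ] μ[fun ω => A ω * Y ω | m] - μ[A | m] * μ[Y | m] := by
  have hsub : μ[fun ω => (A ω - μ[A | m] ω) * Y ω | m]
      =ᵐ[μ] μ[A * Y | m] - μ[μ[A | m] * Y | m] := by
    rw [show (fun ω => (A ω - μ[A | m] ω) * Y ω) = A * Y - μ[A | m] * Y by ext; simp [sub_mul]]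
    exact condExp_sub (hA.mul_of_top_left hY) (integrable_condExp.mul_of_top_left hY) m
  filter_upwards [hsub, condExp_mul_of_stronglyMeasurable_left stronglyMeasurable_condExp
    (integrable_condExp.mul_of_top_left hY) (hY.integrable le_top)] with ω h1 h2
  rw [h1, Pi.sub_apply, h2]
  rfl

lemma condExp_comp_eq_integral_of_indepFun [IsFiniteMeasure μ] {β : Type*} [MeasurableSpace β]
    {B : Ω → β} {V : Ω → 𝒱} (hB : Measurable B) (hV : Measurable V) (hBV : IndepFun B V μ)
    {h : 𝒱 → ℝ} (hh : Measurable h) :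
    μ[fun ω => h (V ω) | MeasurableSpace.comap B inferInstance]
      =ᵐ[μ] fun _ => ∫ ω, h (V ω) ∂μ :=
  condExp_indep_eq hV.comap_le hB.comap_le (hh.comp (comap_measurable V)).stronglyMeasurable
    ((IndepFun_iff_Indep B V μ).1 hBV).symm

lemma condExp_mul_add_comp_of_indepFun [IsFiniteMeasure μ] {B : Ω → ℝ} {V : Ω → 𝒱}
    (hB : Measurable B) (hV : Measurable V) (hBV : IndepFun B V μ) {φ ψ : 𝒱 → ℝ}
    (hφ : Measurable φ) (hψ : Measurable ψ) (hφV : Integrable (fun ω => φ (V ω)) μ)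
    (hBφV : Integrable (fun ω => B ω * φ (V ω)) μ) (hψV : Integrable (fun ω => ψ (V ω)) μ) :
    μ[fun ω => B ω * φ (V ω) + ψ (V ω) | MeasurableSpace.comap B inferInstance]
      =ᵐ[μ] fun ω => B ω * ∫ ω, φ (V ω) ∂μ + ∫ ω, ψ (V ω) ∂μ := by
  have hpull : μ[fun ω => B ω * φ (V ω) | MeasurableSpace.comap B inferInstance]
      =ᵐ[μ] B * μ[fun ω => φ (V ω) | MeasurableSpace.comap B inferInstance] :=
    condExp_mul_of_stronglyMeasurable_left (comap_measurable B).stronglyMeasurable hBφV hφV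
  filter_upwards [condExp_add hBφV hψV _, hpull,
    condExp_comp_eq_integral_of_indepFun hB hV hBV hφ,
    condExp_comp_eq_integral_of_indepFun hB hV hBV hψ] with ω h1 h2 h3 h4
  rw [show (fun ω => B ω * φ (V ω) + ψ (V ω))
      = (fun ω => B ω * φ (V ω)) + fun ω => ψ (V ω) from rfl,
    h1, Pi.add_apply, h2, Pi.mul_apply, h3, h4]

lemma condExp_mul_comp_of_condExp_eq [IsFiniteMeasure μ] {A B : Ω → ℝ} {V : Ω → 𝒱}
    {αz αu : 𝒱 → ℝ} (hB : Measurable B) (hV : Measurable V) (hBV : IndepFun B V μ)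
    (hαz : Measurable αz) (hαu : Measurable αu) (hA : Integrable A μ) (hBL : MemLp B ⊤ μ)
    (hαzV : MemLp (fun ω => αz (V ω)) ⊤ μ) (hαuV : MemLp (fun ω => αu (V ω)) ⊤ μ)
    (htreat : μ[A | MeasurableSpace.comap (fun ω => (B ω, V ω)) inferInstance]
      =ᵐ[μ] fun ω => αz (V ω) * B ω + αu (V ω))
    (g : 𝒱 → ℝ) (hg : Measurable g) (hgV : MemLp (fun ω => g (V ω)) ⊤ μ) :
    μ[fun ω => A ω * g (V ω) | MeasurableSpace.comap B inferInstance]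
      =ᵐ[μ] fun ω => B ω * ∫ ω, αz (V ω) * g (V ω) ∂μ + ∫ ω, αu (V ω) * g (V ω) ∂μ := by
  set mBV := MeasurableSpace.comap (fun ω => (B ω, V ω)) inferInstance
  have hmBV : mBV = MeasurableSpace.comap B inferInstance ⊔ MeasurableSpace.comap V inferInstance :=
    MeasurableSpace.comap_prodMk B V
  have hmB_le : MeasurableSpace.comap B inferInstance ≤ mBV := hmBV ▸ le_sup_left
  have hgV_meas : StronglyMeasurable[mBV] fun ω => g (V ω) :=
    ((hg.comp (comap_measurable V)).mono (hmBV ▸ le_sup_right) le_rfl).stronglyMeasurable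
  have hinner : μ[fun ω => A ω * g (V ω) | mBV]
      =ᵐ[μ] fun ω => B ω * (αz (V ω) * g (V ω)) + αu (V ω) * g (V ω) := by
    have hpull : μ[fun ω => A ω * g (V ω) | mBV] =ᵐ[μ] μ[A | mBV] * fun ω => g (V ω) :=
      condExp_mul_of_stronglyMeasurable_right hgV_meas (hA.mul_of_top_left hgV) hA
    filter_upwards [hpull, htreat] with ω h1 h2
    rw [h1, Pi.mul_apply, h2]
    ring
  have hαzgV : MemLp (fun ω => αz (V ω) * g (V ω)) ⊤ μ := hgV.mul' hαzV
  calc μ[fun ω => A ω * g (V ω) | MeasurableSpace.comap B inferInstance]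
      =ᵐ[μ] μ[μ[fun ω => A ω * g (V ω) | mBV] | MeasurableSpace.comap B inferInstance] :=
        (condExp_condExp_of_le hmB_le (hB.prodMk hV).comap_le).symm
    _ =ᵐ[μ] μ[fun ω => B ω * (αz (V ω) * g (V ω)) + αu (V ω) * g (V ω)
          | MeasurableSpace.comap B inferInstance] := condExp_congr_ae hinner
    _ =ᵐ[μ] _ := condExp_mul_add_comp_of_indepFun hB hV hBV (hαz.mul hg) (hαu.mul hg)
        (hαzgV.integrable le_top) ((hαzgV.mul' hBL).integrable le_top)
        ((hgV.mul' hαuV).integrable le_top)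

end

/-- Residual-regression identity:
`E[(A − E[A|B])·g(V) | B] = Cov(α_z(V), g(V))·B + Cov(α_u(V), g(V))` almost surely. -/
theorem residual_regression_identity
    {Ω 𝒱 : Type*} [MeasurableSpace Ω] [MeasurableSpace 𝒱]
    (μ : Measure Ω) [IsProbabilityMeasure μ]
    (V : Ω → 𝒱) (A B : Ω → ℝ)
    (hV : Measurable V) (hA : Measurable A) (hB : Measurable B)
    (hA01 : ∀ ω, A ω = 0 ∨ A ω = 1) (hB01 : ∀ ω, B ω = 0 ∨ B ω = 1)
    (αz αu : 𝒱 → ℝ) (hαzm : Measurable αz) (hαum : Measurable αu)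
    (hαzb : ∃ C, ∀ x, |αz x| ≤ C) (hαub : ∃ C, ∀ x, |αu x| ≤ C)
    (htreat : μ[A | MeasurableSpace.comap (fun ω => (B ω, V ω)) inferInstance]
        =ᵐ[μ] fun ω => αz (V ω) * B ω + αu (V ω))
    (hindep : IndepFun B V μ)
    (g : 𝒱 → ℝ) (hgm : Measurable g) (hgb : ∃ C, ∀ x, |g x| ≤ C) :
    μ[(fun ω => (A ω - (μ[A | MeasurableSpace.comap B inferInstance]) ω) * g (V ω))
        | MeasurableSpace.comap B inferInstance]
      =ᵐ[μ] fun ω =>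
        covE μ (fun x => αz (V x)) (fun x => g (V x)) * B ω
          + covE μ (fun x => αu (V x)) (fun x => g (V x)) := by
  obtain ⟨Cz, hCz⟩ := hαzb
  obtain ⟨Cu, hCu⟩ := hαub
  obtain ⟨Cg, hCg⟩ := hgb
  have hAL : MemLp A ⊤ μ := memLp_top_of_zero_or_one hA hA01
  have hgV : MemLp (fun ω => g (V ω)) ⊤ μ := memLp_top_comp_of_abs_le hgm hV hCg
  have hcond := condExp_mul_comp_of_condExp_eq hB hV hindep hαzm hαum (hAL.integrable le_top)
    (memLp_top_of_zero_or_one hB hB01) (memLp_top_comp_of_abs_le hαzm hV hCz)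
    (memLp_top_comp_of_abs_le hαum hV hCu) htreat
  have hAg := hcond g hgm hgV
  have hA1 := hcond (fun _ => 1) measurable_const (memLp_const 1)
  simp only [mul_one] at hA1
  filter_upwards [condExp_sub_condExp_mul (hAL.integrable le_top) hgV, hAg, hA1,
    condExp_comp_eq_integral_of_indepFun hB hV hindep hgm] with ω h1 h2 h3 h4
  rw [h1, Pi.sub_apply, Pi.mul_apply, h2, h3, h4, covE, covE]
  ring
end

section
/- Unmeasured-effect residual identity: under the treatment model and IV independence, E[(B − E[B])·(A − E[A|B])·ϑ_u(V)] = Var(B)·Cov(α_z(V), ϑ_u(V)). In particular this expectation vanishes when Cov(α_z(V), ϑ_u(V)) = 0. -/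
/-!
Write `W = B - E[B]` and `a = α_z(V) B + α_u(V) = E[A | B, V]`. Since `W ϑ_u(V)` is
`σ(B, V)`-measurable, `E[W A ϑ_u(V)] = E[W a ϑ_u(V)]`; since `W E[A | B]` is `σ(B)`-measurable,
hence independent of `V`, `E[W E[A | B] ϑ_u(V)] = E[W A] E[ϑ_u(V)] = E[W a] E[ϑ_u(V)]`.
Expanding `a` and using independence once more, with `E[W] = 0` and `E[W B] = Var(B)`, the
difference of the two is `Var(B) (E[α_z(V) ϑ_u(V)] - E[α_z(V)] E[ϑ_u(V)])`.
-/

open MeasureTheory ProbabilityTheory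

open scoped ENNReal

section

variable {Ω : Type*} {m₁ m₂ m mΩ : MeasurableSpace Ω} {μ : Measure Ω}

theorem integral_mul_condExp_of_stronglyMeasurable (hm : m ≤ mΩ) [SigmaFinite (μ.trim hm)]
    {g X : Ω → ℝ} (hg : StronglyMeasurable[m] g) (hgX : Integrable (g * X) μ)
    (hX : Integrable X μ) :
    ∫ ω, g ω * (μ[X|m]) ω ∂μ = ∫ ω, g ω * X ω ∂μ :=
  calc ∫ ω, g ω * (μ[X|m]) ω ∂μ = ∫ ω, (μ[g * X|m]) ω ∂μ :=
        integral_congr_ae (condExp_mul_of_stronglyMeasurable_left hg hgX hX).symm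
    _ = ∫ ω, g ω * X ω ∂μ := integral_condExp hm

theorem ProbabilityTheory.Indep.integral_mul_eq_mul_integral (h : Indep m₁ m₂ μ)
    (h₁ : m₁ ≤ mΩ) (h₂ : m₂ ≤ mΩ) {X Y : Ω → ℝ} (hX : StronglyMeasurable[m₁] X)
    (hY : StronglyMeasurable[m₂] Y) :
    ∫ ω, X ω * Y ω ∂μ = (∫ ω, X ω ∂μ) * ∫ ω, Y ω ∂μ := by
  have hXY : X ⟂ᵢ[μ] Y := (IndepFun_iff_Indep X Y μ).2 <|
    indep_of_indep_of_le_right (indep_of_indep_of_le_left h hX.measurable.comap_le)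
      hY.measurable.comap_le
  exact hXY.integral_fun_mul_eq_mul_integral (hX.mono h₁).aestronglyMeasurable
    (hY.mono h₂).aestronglyMeasurable

theorem integral_mul_sub_condExp_mul [IsFiniteMeasure μ] (hindep : Indep m₁ m₂ μ)
    (h₁ : m₁ ≤ m) (h₂ : m₂ ≤ m) (hm : m ≤ mΩ) {A a Z Ψ : Ω → ℝ} (hA : Integrable A μ) (ha : μ[A|m] =ᵐ[μ] a)
    (hZm : StronglyMeasurable[m₁] Z) (hΨm : StronglyMeasurable[m₂] Ψ)
    (hZ : MemLp Z ∞ μ) (hΨ : MemLp Ψ ∞ μ) :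
    ∫ ω, Z ω * (A ω - (μ[A|m₁]) ω) * Ψ ω ∂μ
      = ∫ ω, Z ω * a ω * Ψ ω ∂μ - (∫ ω, Z ω * a ω ∂μ) * ∫ ω, Ψ ω ∂μ := by
  have tower : ∀ g : Ω → ℝ, StronglyMeasurable[m] g → MemLp g ∞ μ →
      ∫ ω, g ω * A ω ∂μ = ∫ ω, g ω * a ω ∂μ := fun g hgm hg => by
    rw [← integral_mul_condExp_of_stronglyMeasurable hm hgm (hA.mul_of_top_right hg) hA]
    exact integral_congr_ae (ha.mono fun ω hω => congrArg (g ω * ·) hω)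
  have hZΨ : MemLp (fun ω => Z ω * Ψ ω) ∞ μ := hΨ.mul hZ
  have hZΨA : Integrable (fun ω => Z ω * Ψ ω * A ω) μ := hA.mul_of_top_right hZΨ
  have hZAΨ : Integrable (fun ω => Z ω * (μ[A|m₁]) ω * Ψ ω) μ :=
    (integrable_condExp.mul_of_top_right hZ).mul_of_top_left hΨ
  calc ∫ ω, Z ω * (A ω - (μ[A|m₁]) ω) * Ψ ω ∂μ
      = ∫ ω, Z ω * Ψ ω * A ω ∂μ - ∫ ω, Z ω * (μ[A|m₁]) ω * Ψ ω ∂μ := by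
        rw [← integral_sub hZΨA hZAΨ]
        congr 1 with ω; ring
    _ = ∫ ω, Z ω * Ψ ω * a ω ∂μ - (∫ ω, Z ω * A ω ∂μ) * ∫ ω, Ψ ω ∂μ := by
        rw [tower (fun ω => Z ω * Ψ ω) ((hZm.mono h₁).mul (hΨm.mono h₂)) hZΨ,
          hindep.integral_mul_eq_mul_integral (X := fun ω => Z ω * (μ[A|m₁]) ω) (h₁.trans hm)
            (h₂.trans hm) (hZm.mul stronglyMeasurable_condExp) hΨm,
          integral_mul_condExp_of_stronglyMeasurable (h₁.trans hm) hZm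
            (hA.mul_of_top_right hZ) hA]
    _ = ∫ ω, Z ω * a ω * Ψ ω ∂μ - (∫ ω, Z ω * a ω ∂μ) * ∫ ω, Ψ ω ∂μ := by
        rw [tower Z (hZm.mono h₁) hZ]
        congr 2 with ω; ring

theorem integral_centered_mul_affine [IsProbabilityMeasure μ] (hindep : Indep m₁ m₂ μ)
    (h₁ : m₁ ≤ mΩ) (h₂ : m₂ ≤ mΩ) {B F G : Ω → ℝ} (hBm : StronglyMeasurable[m₁] B) (hFm : StronglyMeasurable[m₂] F)
    (hGm : StronglyMeasurable[m₂] G) (hB : MemLp B 2 μ) (hF : MemLp F ∞ μ) (hG : MemLp G ∞ μ) :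
    ∫ ω, (B ω - ∫ x, B x ∂μ) * (F ω * B ω + G ω) ∂μ = covE μ B B * ∫ ω, F ω ∂μ := by
  set W := fun ω => B ω - ∫ x, B x ∂μ
  have hWm : StronglyMeasurable[m₁] W := hBm.sub stronglyMeasurable_const
  have hW : MemLp W 2 μ := hB.sub (memLp_const _)
  have hW_int : Integrable W μ := hW.integrable one_le_two
  have hWBF : Integrable (fun ω => W ω * B ω * F ω) μ :=
    (hW.integrable_mul hB).mul_of_top_left hF
  have hWG : Integrable (fun ω => W ω * G ω) μ := hW_int.mul_of_top_left hG
  have hW_mean : ∫ ω, W ω ∂μ = 0 := by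
    simp [W, integral_sub (hB.integrable one_le_two) (integrable_const _)]
  have hWB_mean : ∫ ω, W ω * B ω ∂μ = covE μ B B := by
    simp only [W, covE, sub_mul]
    have hBB : Integrable (fun ω => B ω * B ω) μ := hB.integrable_mul hB
    rw [integral_sub hBB ((hB.integrable one_le_two).const_mul _),
      integral_const_mul]
  calc ∫ ω, W ω * (F ω * B ω + G ω) ∂μ
      = ∫ ω, W ω * B ω * F ω + W ω * G ω ∂μ := by congr 1 with ω; ring
    _ = (∫ ω, W ω * B ω ∂μ) * (∫ ω, F ω ∂μ) + (∫ ω, W ω ∂μ) * ∫ ω, G ω ∂μ := by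
        rw [integral_add hWBF hWG,
          hindep.integral_mul_eq_mul_integral (X := fun ω => W ω * B ω) h₁ h₂ (hWm.mul hBm) hFm,
          hindep.integral_mul_eq_mul_integral h₁ h₂ hWm hGm]
    _ = covE μ B B * ∫ ω, F ω ∂μ := by rw [hWB_mean, hW_mean]; ring

theorem integral_centered_mul_affine_mul_sub [IsProbabilityMeasure μ] (hindep : Indep m₁ m₂ μ)
    (h₁ : m₁ ≤ mΩ) (h₂ : m₂ ≤ mΩ) {B F G Ψ : Ω → ℝ} (hBm : StronglyMeasurable[m₁] B)
    (hFm : StronglyMeasurable[m₂] F) (hGm : StronglyMeasurable[m₂] G)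
    (hΨm : StronglyMeasurable[m₂] Ψ) (hB : MemLp B 2 μ) (hF : MemLp F ∞ μ) (hG : MemLp G ∞ μ)
    (hΨ : MemLp Ψ ∞ μ) :
    ∫ ω, (B ω - ∫ x, B x ∂μ) * (F ω * B ω + G ω) * Ψ ω ∂μ
        - (∫ ω, (B ω - ∫ x, B x ∂μ) * (F ω * B ω + G ω) ∂μ) * ∫ ω, Ψ ω ∂μ
      = covE μ B B * covE μ F Ψ := by
  have hΨ_mul : ∫ ω, (B ω - ∫ x, B x ∂μ) * (F ω * B ω + G ω) * Ψ ω ∂μ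
      = ∫ ω, (B ω - ∫ x, B x ∂μ) * (F ω * Ψ ω * B ω + G ω * Ψ ω) ∂μ := by
    congr 1 with ω; ring
  rw [hΨ_mul, integral_centered_mul_affine (F := fun ω => F ω * Ψ ω) (G := fun ω => G ω * Ψ ω)
    hindep h₁ h₂ hBm (hFm.mul hΨm) (hGm.mul hΨm) hB (hΨ.mul hF) (hΨ.mul hG),
    integral_centered_mul_affine hindep h₁ h₂ hBm hFm hGm hB hF hG, covE, covE]
  ring

end

/-- Unmeasured-effect residual identity:
`E[(B − E[B])·(A − E[A|B])·ϑ_u(V)] = Var(B)·Cov(α_z(V), ϑ_u(V))`; in particular the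
expectation vanishes when `Cov(α_z(V), ϑ_u(V)) = 0`. -/
theorem unmeasured_effect_residual_identity
    {Ω 𝒱 : Type*} [MeasurableSpace Ω] [MeasurableSpace 𝒱]
    (μ : Measure Ω) [IsProbabilityMeasure μ]
    (V : Ω → 𝒱) (A B : Ω → ℝ)
    (hV : Measurable V) (hA : Measurable A) (hB : Measurable B)
    (hA01 : ∀ ω, A ω = 0 ∨ A ω = 1) (hB01 : ∀ ω, B ω = 0 ∨ B ω = 1)
    (αz αu : 𝒱 → ℝ) (hαzm : Measurable αz) (hαum : Measurable αu)
    (hαzb : ∃ C, ∀ x, |αz x| ≤ C) (hαub : ∃ C, ∀ x, |αu x| ≤ C)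
    (htreat : μ[A | MeasurableSpace.comap (fun ω => (B ω, V ω)) inferInstance]
        =ᵐ[μ] fun ω => αz (V ω) * B ω + αu (V ω))
    (hindep : IndepFun B V μ)
    (ϑu : 𝒱 → ℝ) (hϑum : Measurable ϑu) (hϑub : ∃ C, ∀ x, |ϑu x| ≤ C) :
    (∫ ω, (B ω - ∫ x, B x ∂μ)
        * (A ω - (μ[A | MeasurableSpace.comap B inferInstance]) ω) * ϑu (V ω) ∂μ)
      = covE μ B B * covE μ (fun x => αz (V x)) (fun x => ϑu (V x))
    ∧ (covE μ (fun x => αz (V x)) (fun x => ϑu (V x)) = 0 →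
        (∫ ω, (B ω - ∫ x, B x ∂μ)
          * (A ω - (μ[A | MeasurableSpace.comap B inferInstance]) ω) * ϑu (V ω) ∂μ) = 0) := by
  have memLp_top : ∀ {f : Ω → ℝ}, Measurable f → (∃ C, ∀ ω, |f ω| ≤ C) → MemLp f ∞ μ :=
    fun hf ⟨C, hC⟩ => memLp_top_of_bound hf.aestronglyMeasurable C (ae_of_all _ hC)
  have memLp_comp : ∀ {f : 𝒱 → ℝ}, Measurable f → (∃ C, ∀ x, |f x| ≤ C) →
      MemLp (fun ω => f (V ω)) ∞ μ :=
    fun hf ⟨C, hC⟩ => memLp_top (hf.comp hV) ⟨C, fun ω => hC (V ω)⟩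
  have binary_bdd : ∀ {X : Ω → ℝ}, (∀ ω, X ω = 0 ∨ X ω = 1) → ∃ C, ∀ ω, |X ω| ≤ C :=
    fun h => ⟨1, fun ω => by rcases h ω with h | h <;> simp [h]⟩
  have hB_top := memLp_top hB (binary_bdd hB01)
  have hBV_meas := comap_measurable (m := inferInstance) (fun ω => (B ω, V ω))
  have hV_comap {f : 𝒱 → ℝ} (hf : Measurable f) :
      StronglyMeasurable[MeasurableSpace.comap V inferInstance] (fun ω => f (V ω)) :=
    (hf.comp (comap_measurable V)).stronglyMeasurable
  have hB_comap : StronglyMeasurable[MeasurableSpace.comap B inferInstance] B :=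
    (comap_measurable B).stronglyMeasurable
  have hBV : Indep (MeasurableSpace.comap B inferInstance)
      (MeasurableSpace.comap V inferInstance) μ := (IndepFun_iff_Indep B V μ).1 hindep
  have key := (integral_mul_sub_condExp_mul hBV (measurable_fst.comp hBV_meas).comap_le
      (measurable_snd.comp hBV_meas).comap_le (hB.prodMk hV).comap_le
      ((memLp_top hA (binary_bdd hA01)).integrable le_top) htreat
      (Z := fun ω => B ω - ∫ x, B x ∂μ) (hB_comap.sub stronglyMeasurable_const) (hV_comap hϑum)
      (hB_top.sub (memLp_const _)) (memLp_comp hϑum hϑub)).trans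
    (integral_centered_mul_affine_mul_sub hBV hB.comap_le hV.comap_le hB_comap
      (hV_comap hαzm) (hV_comap hαum) (hV_comap hϑum) (hB_top.mono_exponent le_top)
      (memLp_comp hαzm hαzb) (memLp_comp hαum hαub) (memLp_comp hϑum hϑub))
  exact ⟨key, fun h => by rw [key, h, mul_zero]⟩
end

section
/- Instrument-effect residual identity: under the treatment model and IV independence, E[(B − E[B])·(A − E[A|B])·B·ϑ_z(V)] = Var(B)·(Cov(α_z(V), ϑ_z(V)) + Cov(α_u(V), ϑ_z(V))). In particular this expectation vanishes when Cov(ϑ_z(V), α_z(V)) = 0 and Cov(ϑ_z(V), α_u(V)) = 0. -/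
/-!
The weight `(B - E[B])·B·ϑ(V)` is `σ(B, V)`-measurable, so in the expectation `A` may be replaced
by `E[A | B, V] = α_z(V)·B + α_u(V)`, while independence of `B` and `V` gives
`E[A | B] = E[α_z(V)]·B + E[α_u(V)]`. Because `B² = B`, the weighted residual collapses to
`(B - E[B])·B·ϑ(V)·(α_z(V) - E[α_z(V)] + α_u(V) - E[α_u(V)])`, and independence factorises its
expectation as `E[(B - E[B])·B] = Var(B)` times the sum of the two covariances.
-/

open MeasureTheory ProbabilityTheory

open scoped ENNReal

theorem MeasurableSpace.comap_le_comap_prodMk {Ω β γ : Type*} [mβ : MeasurableSpace β]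
    [MeasurableSpace γ] (X : Ω → β) (Y : Ω → γ) :
    mβ.comap X ≤ MeasurableSpace.comap (fun ω => (X ω, Y ω)) inferInstance :=
  (comap_measurable fun ω => (X ω, Y ω)).fst.comap_le

section

variable {Ω 𝒱 : Type*} [mΩ : MeasurableSpace Ω] [MeasurableSpace 𝒱] {μ : Measure Ω}

theorem covE_comm (μ : Measure Ω) (X Z : Ω → ℝ) : covE μ X Z = covE μ Z X := by
  simp only [covE, mul_comm]

theorem covE_eq_integral_sub_mul [IsProbabilityMeasure μ] {X Z : Ω → ℝ} (hZ : Integrable Z μ)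
    (hXZ : Integrable (fun ω => X ω * Z ω) μ) :
    covE μ X Z = ∫ ω, (X ω - ∫ x, X x ∂μ) * Z ω ∂μ := by
  simp_rw [sub_mul]
  rw [integral_sub hXZ (hZ.const_mul _), integral_const_mul, covE]

theorem integral_sub_mul_add_sub_mul_eq_covE_add_covE [IsProbabilityMeasure μ] {X X' Z : Ω → ℝ}
    (hX : MemLp X 2 μ) (hX' : MemLp X' 2 μ) (hZ : MemLp Z 2 μ) :
    ∫ ω, (X ω - ∫ x, X x ∂μ) * Z ω + (X' ω - ∫ x, X' x ∂μ) * Z ω ∂μ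
      = covE μ X Z + covE μ X' Z := by
  have hXZ : Integrable (fun ω => (X ω - ∫ x, X x ∂μ) * Z ω) μ :=
    (hX.sub (memLp_const _)).integrable_mul hZ
  have hX'Z : Integrable (fun ω => (X' ω - ∫ x, X' x ∂μ) * Z ω) μ :=
    (hX'.sub (memLp_const _)).integrable_mul hZ
  rw [integral_add hXZ hX'Z, covE_eq_integral_sub_mul (hZ.integrable one_le_two)
    (hX.integrable_mul hZ), covE_eq_integral_sub_mul (hZ.integrable one_le_two)
    (hX'.integrable_mul hZ)]

theorem memLp_comp_of_forall_abs_le [IsFiniteMeasure μ] {p : ℝ≥0∞} {V : Ω → 𝒱}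
    (hV : Measurable V) {g : 𝒱 → ℝ} (hg : Measurable g) (hgC : ∃ C, ∀ x, |g x| ≤ C) :
    MemLp (fun ω => g (V ω)) p μ :=
  let ⟨C, hC⟩ := hgC
  MemLp.of_bound (hg.comp hV).aestronglyMeasurable C (ae_of_all _ fun ω => hC (V ω))

theorem memLp_of_forall_eq_zero_or_eq_one [IsFiniteMeasure μ] {p : ℝ≥0∞} {B : Ω → ℝ}
    (hB : Measurable B) (hB01 : ∀ ω, B ω = 0 ∨ B ω = 1) : MemLp B p μ :=
  MemLp.of_bound hB.aestronglyMeasurable 1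
    (ae_of_all _ fun ω => by rcases hB01 ω with h | h <;> simp [h])

theorem ProbabilityTheory.IndepFun.integral_sub_mul_self_mul_comp_eq_covE_mul
    [IsProbabilityMeasure μ] {B : Ω → ℝ} {V : Ω → 𝒱} (hindep : IndepFun B V μ)
    (hB : Measurable B) (hV : Measurable V) (hB2 : MemLp B 2 μ) {φ : 𝒱 → ℝ} (hφ : Measurable φ) :
    ∫ ω, (B ω - ∫ x, B x ∂μ) * B ω * φ (V ω) ∂μ = covE μ B B * ∫ ω, φ (V ω) ∂μ := by
  rw [hindep.integral_fun_comp_mul_comp (f := fun x => (x - ∫ x, B x ∂μ) * x) hB.aemeasurable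
    hV.aemeasurable (by fun_prop) hφ.aestronglyMeasurable,
    covE_eq_integral_sub_mul (hB2.integrable one_le_two) (hB2.integrable_mul hB2)]

theorem condExp_comap_comp_of_indepFun [IsFiniteMeasure μ] {β E : Type*} [MeasurableSpace β]
    [NormedAddCommGroup E] [NormedSpace ℝ E] [CompleteSpace E]
    {B : Ω → β} {V : Ω → 𝒱} (hB : Measurable B) (hV : Measurable V) (hindep : IndepFun B V μ)
    {g : 𝒱 → E} (hg : StronglyMeasurable g) :
    μ[fun ω => g (V ω) | MeasurableSpace.comap B inferInstance] =ᵐ[μ] fun _ => ∫ ω, g (V ω) ∂μ :=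
  condExp_indep_eq hV.comap_le hB.comap_le (hg.comp_measurable (comap_measurable V))
    ((IndepFun_iff_Indep V B μ).mp hindep.symm)

theorem condExp_comap_eq_of_condExp_comap_prodMk_eq [IsFiniteMeasure μ] {A B : Ω → ℝ}
    {V : Ω → 𝒱} (hB : Measurable B) (hV : Measurable V) (hindep : IndepFun B V μ)
    (hBint : Integrable B μ) {f g : 𝒱 → ℝ} (hf : Measurable f) (hg : Measurable g)
    (hfV : Integrable (fun ω => f (V ω)) μ) (hgV : Integrable (fun ω => g (V ω)) μ)
    (hA : μ[A | MeasurableSpace.comap (fun ω => (B ω, V ω)) inferInstance]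
      =ᵐ[μ] fun ω => f (V ω) * B ω + g (V ω)) :
    μ[A | MeasurableSpace.comap B inferInstance]
      =ᵐ[μ] fun ω => (∫ x, f (V x) ∂μ) * B ω + ∫ x, g (V x) ∂μ := by
  have hBm : StronglyMeasurable[MeasurableSpace.comap B inferInstance] B :=
    (comap_measurable B).stronglyMeasurable
  have hfVB : Integrable ((fun ω => f (V ω)) * B) μ :=
    (hindep.symm.comp hf measurable_id).integrable_mul hfV hBint
  calc μ[A | MeasurableSpace.comap B inferInstance]
      =ᵐ[μ] μ[μ[A | MeasurableSpace.comap (fun ω => (B ω, V ω)) inferInstance]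
          | MeasurableSpace.comap B inferInstance] :=
        (condExp_condExp_of_le (MeasurableSpace.comap_le_comap_prodMk B V)
          (hB.prodMk hV).comap_le).symm
    _ =ᵐ[μ] μ[fun ω => f (V ω) * B ω + g (V ω) | MeasurableSpace.comap B inferInstance] :=
        condExp_congr_ae hA
    _ =ᵐ[μ] μ[(fun ω => f (V ω)) * B | MeasurableSpace.comap B inferInstance]
          + μ[fun ω => g (V ω) | MeasurableSpace.comap B inferInstance] :=
        condExp_add hfVB hgV _
    _ =ᵐ[μ] fun ω => (∫ x, f (V x) ∂μ) * B ω + ∫ x, g (V x) ∂μ := by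
        filter_upwards [condExp_mul_of_stronglyMeasurable_right hBm hfVB hfV,
          condExp_comap_comp_of_indepFun hB hV hindep hf.stronglyMeasurable,
          condExp_comap_comp_of_indepFun hB hV hindep hg.stronglyMeasurable] with ω hfB hf hg
        rw [Pi.add_apply, hfB, Pi.mul_apply, hf, hg]

theorem integral_mul_sub_condExp_eq [IsFiniteMeasure μ] {m₁ m₂ : MeasurableSpace Ω}
    (hm₁₂ : m₁ ≤ m₂) (hm₂ : m₂ ≤ mΩ) {A W : Ω → ℝ} (hA : Integrable A μ)
    (hW : StronglyMeasurable[m₂] W) (hWtop : MemLp W ∞ μ) :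
    ∫ ω, W ω * (A ω - μ[A | m₁] ω) ∂μ = ∫ ω, W ω * (μ[A | m₂] ω - μ[A | m₁] ω) ∂μ := by
  have hres : Integrable (A - μ[A | m₁]) μ := hA.sub integrable_condExp
  have hcondres : μ[A - μ[A | m₁] | m₂] =ᵐ[μ] μ[A | m₂] - μ[A | m₁] := by
    filter_upwards [condExp_sub hA integrable_condExp m₂] with ω h
    rw [h, Pi.sub_apply, condExp_of_stronglyMeasurable hm₂
      (stronglyMeasurable_condExp.mono hm₁₂) integrable_condExp]
    rfl
  calc ∫ ω, W ω * (A ω - μ[A | m₁] ω) ∂μ = ∫ ω, μ[W * (A - μ[A | m₁]) | m₂] ω ∂μ :=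
        (integral_condExp hm₂).symm
    _ = ∫ ω, W ω * (μ[A | m₂] ω - μ[A | m₁] ω) ∂μ := by
        refine integral_congr_ae ?_
        filter_upwards [condExp_mul_of_stronglyMeasurable_left hW
          (hres.mul_of_top_right hWtop) hres, hcondres] with ω h h'
        rw [h, Pi.mul_apply, h', Pi.sub_apply]

theorem integral_mul_sub_condExp_comap_eq [IsFiniteMeasure μ] {A B : Ω → ℝ} {V : Ω → 𝒱}
    (hB : Measurable B) (hV : Measurable V) (hindep : IndepFun B V μ) (hA : Integrable A μ)
    (hBint : Integrable B μ) {f g : 𝒱 → ℝ} (hf : Measurable f) (hg : Measurable g)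
    (hfV : Integrable (fun ω => f (V ω)) μ) (hgV : Integrable (fun ω => g (V ω)) μ)
    (hmodel : μ[A | MeasurableSpace.comap (fun ω => (B ω, V ω)) inferInstance]
      =ᵐ[μ] fun ω => f (V ω) * B ω + g (V ω))
    {w : ℝ × 𝒱 → ℝ} (hw : Measurable w) (hwtop : MemLp (fun ω => w (B ω, V ω)) ∞ μ) :
    ∫ ω, w (B ω, V ω) * (A ω - μ[A | MeasurableSpace.comap B inferInstance] ω) ∂μ
      = ∫ ω, w (B ω, V ω)
          * ((f (V ω) - ∫ x, f (V x) ∂μ) * B ω + (g (V ω) - ∫ x, g (V x) ∂μ)) ∂μ := by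
  refine (integral_mul_sub_condExp_eq (MeasurableSpace.comap_le_comap_prodMk B V)
    (hB.prodMk hV).comap_le hA (hw.comp (comap_measurable _)).stronglyMeasurable hwtop).trans
    (integral_congr_ae ?_)
  filter_upwards [hmodel, condExp_comap_eq_of_condExp_comap_prodMk_eq hB hV hindep hBint hf hg
    hfV hgV hmodel] with ω hBV hcondB
  rw [hBV, hcondB, Function.comp_apply]
  ring

end

/-- Instrument-effect residual identity:
`E[(B − E[B])·(A − E[A|B])·B·ϑ_z(V)] = Var(B)·(Cov(α_z(V),ϑ_z(V)) + Cov(α_u(V),ϑ_z(V)))`;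
in particular the expectation vanishes when both covariances vanish. -/
theorem instrument_effect_residual_identity
    {Ω 𝒱 : Type*} [MeasurableSpace Ω] [MeasurableSpace 𝒱]
    (μ : Measure Ω) [IsProbabilityMeasure μ]
    (V : Ω → 𝒱) (A B : Ω → ℝ)
    (hV : Measurable V) (hA : Measurable A) (hB : Measurable B)
    (hA01 : ∀ ω, A ω = 0 ∨ A ω = 1) (hB01 : ∀ ω, B ω = 0 ∨ B ω = 1)
    (αz αu : 𝒱 → ℝ) (hαzm : Measurable αz) (hαum : Measurable αu)
    (hαzb : ∃ C, ∀ x, |αz x| ≤ C) (hαub : ∃ C, ∀ x, |αu x| ≤ C)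
    (htreat : μ[A | MeasurableSpace.comap (fun ω => (B ω, V ω)) inferInstance]
        =ᵐ[μ] fun ω => αz (V ω) * B ω + αu (V ω))
    (hindep : IndepFun B V μ)
    (ϑz : 𝒱 → ℝ) (hϑzm : Measurable ϑz) (hϑzb : ∃ C, ∀ x, |ϑz x| ≤ C) :
    (∫ ω, (B ω - ∫ x, B x ∂μ)
        * (A ω - (μ[A | MeasurableSpace.comap B inferInstance]) ω) * B ω * ϑz (V ω) ∂μ)
      = covE μ B B * (covE μ (fun x => αz (V x)) (fun x => ϑz (V x))
          + covE μ (fun x => αu (V x)) (fun x => ϑz (V x)))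
    ∧ (covE μ (fun x => ϑz (V x)) (fun x => αz (V x)) = 0 →
        covE μ (fun x => ϑz (V x)) (fun x => αu (V x)) = 0 →
        (∫ ω, (B ω - ∫ x, B x ∂μ)
          * (A ω - (μ[A | MeasurableSpace.comap B inferInstance]) ω) * B ω * ϑz (V ω) ∂μ) = 0) := by
  have hB2 : MemLp B 2 μ := memLp_of_forall_eq_zero_or_eq_one hB hB01
  have hαz2 : MemLp (fun ω => αz (V ω)) 2 μ := memLp_comp_of_forall_abs_le hV hαzm hαzb
  have hαu2 : MemLp (fun ω => αu (V ω)) 2 μ := memLp_comp_of_forall_abs_le hV hαum hαub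
  have hϑ2 : MemLp (fun ω => ϑz (V ω)) 2 μ := memLp_comp_of_forall_abs_le hV hϑzm hϑzb
  have hBtop : MemLp B ∞ μ := memLp_of_forall_eq_zero_or_eq_one hB hB01
  have hϑtop : MemLp (fun ω => ϑz (V ω)) ∞ μ := memLp_comp_of_forall_abs_le hV hϑzm hϑzb
  set b := ∫ x, B x ∂μ
  set az := ∫ x, αz (V x) ∂μ
  set au := ∫ x, αu (V x) ∂μ
  have hidentity : (∫ ω, (B ω - b)
        * (A ω - (μ[A | MeasurableSpace.comap B inferInstance]) ω) * B ω * ϑz (V ω) ∂μ)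
      = covE μ B B * (covE μ (fun x => αz (V x)) (fun x => ϑz (V x))
          + covE μ (fun x => αu (V x)) (fun x => ϑz (V x))) := calc
    _ = ∫ ω, (B ω - b) * B ω * ϑz (V ω)
          * (A ω - (μ[A | MeasurableSpace.comap B inferInstance]) ω) ∂μ := by
        congr 1; ext ω; ring
    _ = ∫ ω, (B ω - b) * B ω * ϑz (V ω) * ((αz (V ω) - az) * B ω + (αu (V ω) - au)) ∂μ :=
        integral_mul_sub_condExp_comap_eq hB hV hindep
          ((memLp_of_forall_eq_zero_or_eq_one hA hA01).integrable le_rfl)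
          (hB2.integrable one_le_two) hαzm hαum (hαz2.integrable one_le_two)
          (hαu2.integrable one_le_two) htreat (w := fun p => (p.1 - b) * p.1 * ϑz p.2)
          (by fun_prop) (hϑtop.mul' (hBtop.mul' (hBtop.sub (memLp_top_const b)) (r := ∞)))
    _ = ∫ ω, (B ω - b) * B ω
          * ((αz (V ω) - az) * ϑz (V ω) + (αu (V ω) - au) * ϑz (V ω)) ∂μ := by
        congr 1; ext ω
        rcases hB01 ω with h | h <;> rw [h] <;> ring
    _ = covE μ B B * ∫ ω, (αz (V ω) - az) * ϑz (V ω) + (αu (V ω) - au) * ϑz (V ω) ∂μ :=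
        hindep.integral_sub_mul_self_mul_comp_eq_covE_mul hB hV hB2
          (φ := fun v => (αz v - az) * ϑz v + (αu v - au) * ϑz v) (by fun_prop)
    _ = _ := by rw [integral_sub_mul_add_sub_mul_eq_covE_add_covE hαz2 hαu2 hϑ2]
  refine ⟨hidentity, fun hαzϑ hαuϑ => ?_⟩
  rw [covE_comm] at hαzϑ hαuϑ
  rw [hidentity, hαzϑ, hαuϑ, add_zero, mul_zero]
end

section
/- Interaction-effect unconfounding identity: under the treatment model, IV independence, and the orthogonality conditions Cov(ϑ_az(V), α_z(V)) = 0 and Cov(ϑ_az(V), α_u(V)) = 0, it holds that E[(B − E[B])·(A − E[A|B])·A·B·ϑ_az(V)] = E[(B − E[B])·(A − E[A|B])·A·B]·E[ϑ_az(V)]. -/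
open MeasureTheory ProbabilityTheory

/-! Put `h = E[A | B]`. Since `A² = A`, the integrand is `W · ϑ(V) · A` with
`W = (B − E B) · B · (1 − h)`, a function of `B`. Conditioning on `(B, V)` replaces `A` by
`αz(V) B + αu(V)`, and independence of `B` and `V` then gives
`E[W φ(V) A] = E[W B] E[φ αz(V)] + E[W] E[φ αu(V)]`. For `φ = ϑ` the two vanishing covariances
pull `E[ϑ(V)]` out of both terms, leaving `E[ϑ(V)]` times the case `φ = 1`, which is `E[W A]`. -/

open scoped ENNReal

section

variable {Ω : Type*} {m₀ : MeasurableSpace Ω} {μ : Measure Ω}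

theorem memLp_top_of_abs_le {f : Ω → ℝ} {C : ℝ} (hf : AEStronglyMeasurable f μ)
    (hC : ∀ x, |f x| ≤ C) : MemLp f ∞ μ :=
  memLp_top_of_bound hf C (.of_forall hC)

theorem memLp_top_of_eq_zero_or_eq_one {f : Ω → ℝ} (hf : Measurable f)
    (h01 : ∀ x, f x = 0 ∨ f x = 1) : MemLp f ∞ μ :=
  memLp_top_of_abs_le (C := 1) hf.aestronglyMeasurable fun x => by
    rcases h01 x with h | h <;> simp [h]

theorem memLp_top_comp_of_abs_le_s6 {β : Type*} [MeasurableSpace β] {X : Ω → β} {f : β → ℝ}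
    (hX : Measurable X) (hf : Measurable f) (hb : ∃ C, ∀ x, |f x| ≤ C) :
    MemLp (fun a => f (X a)) ∞ μ :=
  let ⟨_, hC⟩ := hb
  memLp_top_of_abs_le (hf.comp hX).aestronglyMeasurable fun a => hC (X a)

theorem integral_mul_eq_integral_mul_of_condExp_ae_eq {m : MeasurableSpace Ω} (hm : m ≤ m₀)
    [SigmaFinite (μ.trim hm)] {X g w : Ω → ℝ} (hX : Integrable X μ) (hw : StronglyMeasurable[m] w)
    (hwX : Integrable (w * X) μ) (hg : μ[X | m] =ᵐ[μ] g) :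
    ∫ ω, w ω * X ω ∂μ = ∫ ω, w ω * g ω ∂μ :=
  calc ∫ ω, w ω * X ω ∂μ = ∫ ω, μ[w * X | m] ω ∂μ := (integral_condExp hm).symm
    _ = ∫ ω, w ω * g ω ∂μ := integral_congr_ae <|
      (condExp_mul_of_stronglyMeasurable_left hw hwX hX).trans (hg.mono fun ω h => by simp [h])

theorem ProbabilityTheory.IndepFun.integral_mul_eq_mul_integral_of_comap
    {β γ : Type*} [MeasurableSpace β] [MeasurableSpace γ] {B : Ω → β} {V : Ω → γ}
    (hBV : IndepFun B V μ) (hB : Measurable B) (hV : Measurable V) {ξ η : Ω → ℝ}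
    (hξ : StronglyMeasurable[.comap B inferInstance] ξ)
    (hη : StronglyMeasurable[.comap V inferInstance] η) :
    ∫ ω, ξ ω * η ω ∂μ = (∫ ω, ξ ω ∂μ) * ∫ ω, η ω ∂μ := by
  have hξη : IndepFun ξ η μ := by
    rw [IndepFun_iff_Indep] at hBV ⊢
    exact indep_of_indep_of_le_right (indep_of_indep_of_le_left hBV hξ.measurable.comap_le)
      hη.measurable.comap_le
  exact hξη.integral_mul_eq_mul_integral (hξ.mono hB.comap_le).aestronglyMeasurable
    (hη.mono hV.comap_le).aestronglyMeasurable

variable [IsProbabilityMeasure μ] {𝒱 : Type*} [MeasurableSpace 𝒱] {V : Ω → 𝒱}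
  {A B W Z Gz Gu : Ω → ℝ}

theorem integral_mul_mul_eq_of_condExp_ae_eq_linear (hV : Measurable V) (hB : Measurable B)
    (hBV : IndepFun B V μ) (hA : MemLp A ∞ μ) (hB_top : MemLp B ∞ μ)
    (hW : StronglyMeasurable[.comap B inferInstance] W) (hW_int : Integrable W μ)
    (hZ : StronglyMeasurable[.comap V inferInstance] Z) (hZ_top : MemLp Z ∞ μ)
    (hGz : StronglyMeasurable[.comap V inferInstance] Gz) (hGz_top : MemLp Gz ∞ μ)
    (hGu : StronglyMeasurable[.comap V inferInstance] Gu) (hGu_top : MemLp Gu ∞ μ)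
    (htreat : μ[A | .comap (fun ω => (B ω, V ω)) inferInstance]
      =ᵐ[μ] fun ω => Gz ω * B ω + Gu ω) :
    ∫ ω, W ω * Z ω * A ω ∂μ
      = (∫ ω, W ω * B ω ∂μ) * (∫ ω, Z ω * Gz ω ∂μ) + (∫ ω, W ω ∂μ) * ∫ ω, Z ω * Gu ω ∂μ := by
  have hBm : MeasurableSpace.comap B inferInstance
      ≤ .comap (fun ω => (B ω, V ω)) inferInstance :=
    (measurable_fst.comp (comap_measurable (fun ω => (B ω, V ω)))).comap_le
  have hVm : MeasurableSpace.comap V inferInstance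
      ≤ .comap (fun ω => (B ω, V ω)) inferInstance :=
    (measurable_snd.comp (comap_measurable (fun ω => (B ω, V ω)))).comap_le
  have hWZ : Integrable (W * Z) μ := hW_int.mul_of_top_left hZ_top
  calc ∫ ω, W ω * Z ω * A ω ∂μ = ∫ ω, (W * Z) ω * (Gz ω * B ω + Gu ω) ∂μ :=
        integral_mul_eq_integral_mul_of_condExp_ae_eq (hB.prodMk hV).comap_le
          (hA.integrable le_top) ((hW.mono hBm).mul (hZ.mono hVm)) (hWZ.mul_of_top_left hA)
          htreat
    _ = ∫ ω, W ω * B ω * (Z ω * Gz ω) + W ω * (Z ω * Gu ω) ∂μ := by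
        congr 1; ext ω; simp only [Pi.mul_apply]; ring
    _ = (∫ ω, W ω * B ω * (Z ω * Gz ω) ∂μ) + ∫ ω, W ω * (Z ω * Gu ω) ∂μ :=
        integral_add ((hW_int.mul_of_top_left hB_top).mul_of_top_left (hGz_top.mul hZ_top))
          (hW_int.mul_of_top_left (hGu_top.mul hZ_top))
    _ = _ := congrArg₂ (· + ·)
        (hBV.integral_mul_eq_mul_integral_of_comap hB hV
          (hW.mul (comap_measurable B).stronglyMeasurable) (hZ.mul hGz))
        (hBV.integral_mul_eq_mul_integral_of_comap hB hV hW (hZ.mul hGu))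

theorem integral_mul_mul_eq_integral_mul_mul_integral_of_covE_eq_zero (hV : Measurable V)
    (hB : Measurable B) (hBV : IndepFun B V μ) (hA : MemLp A ∞ μ) (hB_top : MemLp B ∞ μ)
    (hW : StronglyMeasurable[.comap B inferInstance] W) (hW_int : Integrable W μ)
    (hZ : StronglyMeasurable[.comap V inferInstance] Z) (hZ_top : MemLp Z ∞ μ)
    (hGz : StronglyMeasurable[.comap V inferInstance] Gz) (hGz_top : MemLp Gz ∞ μ)
    (hGu : StronglyMeasurable[.comap V inferInstance] Gu) (hGu_top : MemLp Gu ∞ μ)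
    (htreat : μ[A | .comap (fun ω => (B ω, V ω)) inferInstance]
      =ᵐ[μ] fun ω => Gz ω * B ω + Gu ω)
    (hZGz : covE μ Z Gz = 0) (hZGu : covE μ Z Gu = 0) :
    ∫ ω, W ω * Z ω * A ω ∂μ = (∫ ω, W ω * A ω ∂μ) * ∫ ω, Z ω ∂μ := by
  have hWA := integral_mul_mul_eq_of_condExp_ae_eq_linear (Z := fun _ => 1) hV hB hBV hA hB_top
    hW hW_int stronglyMeasurable_const (memLp_top_const 1) hGz hGz_top hGu hGu_top htreat
  simp only [mul_one, one_mul] at hWA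
  rw [covE, sub_eq_zero] at hZGz hZGu
  rw [integral_mul_mul_eq_of_condExp_ae_eq_linear hV hB hBV hA hB_top hW hW_int hZ hZ_top hGz
    hGz_top hGu hGu_top htreat, hWA, hZGz, hZGu]
  ring

end

/-- Interaction-effect unconfounding identity:
`E[(B − E[B])·(A − E[A|B])·A·B·ϑ_az(V)] = E[(B − E[B])·(A − E[A|B])·A·B]·E[ϑ_az(V)]`. -/
theorem interaction_effect_unconfounding_identity
    {Ω 𝒱 : Type*} [MeasurableSpace Ω] [MeasurableSpace 𝒱]
    (μ : Measure Ω) [IsProbabilityMeasure μ]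
    (V : Ω → 𝒱) (A B : Ω → ℝ)
    (hV : Measurable V) (hA : Measurable A) (hB : Measurable B)
    (hA01 : ∀ ω, A ω = 0 ∨ A ω = 1) (hB01 : ∀ ω, B ω = 0 ∨ B ω = 1)
    (αz αu : 𝒱 → ℝ) (hαzm : Measurable αz) (hαum : Measurable αu)
    (hαzb : ∃ C, ∀ x, |αz x| ≤ C) (hαub : ∃ C, ∀ x, |αu x| ≤ C)
    (htreat : μ[A | MeasurableSpace.comap (fun ω => (B ω, V ω)) inferInstance]
        =ᵐ[μ] fun ω => αz (V ω) * B ω + αu (V ω))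
    (hindep : IndepFun B V μ)
    (ϑaz : 𝒱 → ℝ) (hϑazm : Measurable ϑaz) (hϑazb : ∃ C, ∀ x, |ϑaz x| ≤ C)
    (horth1 : covE μ (fun x => ϑaz (V x)) (fun x => αz (V x)) = 0)
    (horth2 : covE μ (fun x => ϑaz (V x)) (fun x => αu (V x)) = 0) :
    (∫ ω, (B ω - ∫ x, B x ∂μ)
        * (A ω - (μ[A | MeasurableSpace.comap B inferInstance]) ω) * A ω * B ω * ϑaz (V ω) ∂μ)
      = (∫ ω, (B ω - ∫ x, B x ∂μ)
          * (A ω - (μ[A | MeasurableSpace.comap B inferInstance]) ω) * A ω * B ω ∂μ)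
        * (∫ ω, ϑaz (V ω) ∂μ) := by
  set E_B := ∫ x, B x ∂μ
  set h := μ[A | MeasurableSpace.comap B inferInstance]
  set W : Ω → ℝ := fun ω => (B ω - E_B) * B ω * (1 - h ω)
  have hA_idem : ∀ ω, A ω * A ω = A ω := fun ω => by rcases hA01 ω with hAω | hAω <;> simp [hAω]
  have hB_top : MemLp B ∞ μ := memLp_top_of_eq_zero_or_eq_one hB hB01
  have hW : StronglyMeasurable[.comap B inferInstance] W :=
    (((comap_measurable B).sub_const _).mul (comap_measurable B)).stronglyMeasurable.mul
      (stronglyMeasurable_const.sub stronglyMeasurable_condExp)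
  have hW_int : Integrable W μ :=
    ((integrable_const 1).sub integrable_condExp).mul_of_top_right
      (hB_top.mul (hB_top.sub (memLp_top_const E_B)))
  have hcomap {f : 𝒱 → ℝ} (hf : Measurable f) :
      StronglyMeasurable[.comap V inferInstance] fun ω => f (V ω) :=
    (hf.comp (comap_measurable V)).stronglyMeasurable
  calc _ = ∫ ω, W ω * ϑaz (V ω) * A ω ∂μ := integral_congr_ae <| .of_forall fun ω => by
          linear_combination (B ω - E_B) * B ω * ϑaz (V ω) * hA_idem ω
    _ = (∫ ω, W ω * A ω ∂μ) * ∫ ω, ϑaz (V ω) ∂μ :=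
        integral_mul_mul_eq_integral_mul_mul_integral_of_covE_eq_zero hV hB hindep
          (memLp_top_of_eq_zero_or_eq_one hA hA01) hB_top hW hW_int (hcomap hϑazm)
          (memLp_top_comp_of_abs_le_s6 hV hϑazm hϑazb) (hcomap hαzm)
          (memLp_top_comp_of_abs_le_s6 hV hαzm hαzb) (hcomap hαum)
          (memLp_top_comp_of_abs_le_s6 hV hαum hαub) htreat horth1 horth2
    _ = _ := by
        congr 2; ext ω
        linear_combination -(B ω - E_B) * B ω * hA_idem ω
end

section
/- Marginal main-effect step (used in the proof of Lemma 5): under the treatment model, IV independence, and the orthogonality conditions Cov(ϑ_a(V), α_z(V)) = 0 and Cov(ϑ_a(V), α_u(V)) = 0, it holds that E[(B − E[B])·A·ϑ_a(V)] = E[(B − E[B])·A]·E[ϑ_a(V)]. -/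
/-!
Conditioning on `(B, V)` replaces `A` by `α_z(V)·B + α_u(V)`, so for every bounded `k`,
`E[(B − E B)·A·k(V)] = E[(B − E B)(α_z(V)·B + α_u(V))·k(V)]`. Since `B² = B` and `B` is
independent of `V`, the `α_u` part vanishes and this equals `E B·(1 − E B)·E[α_z(V)·k(V)]`.
Taking `k = ϑ_a` and `k = 1` and using `Cov(ϑ_a(V), α_z(V)) = 0` gives the claim.
-/

open MeasureTheory ProbabilityTheory

lemma integral_mul_condExp_of_stronglyMeasurable_s10 {Ω : Type*} {m m₀ : MeasurableSpace Ω}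
    {μ : Measure Ω} [IsFiniteMeasure μ] (hm : m ≤ m₀) {g f : Ω → ℝ}
    (hg : StronglyMeasurable[m] g) (hgf : Integrable (g * f) μ) (hf : Integrable f μ) :
    ∫ ω, g ω * μ[f | m] ω ∂μ = ∫ ω, g ω * f ω ∂μ := by
  calc ∫ ω, g ω * μ[f | m] ω ∂μ = ∫ ω, μ[g * f | m] ω ∂μ :=
        integral_congr_ae (condExp_mul_of_stronglyMeasurable_left hg hgf hf).symm
    _ = ∫ ω, g ω * f ω ∂μ := integral_condExp hm

section BinaryInstrument

variable {Ω : Type*} [MeasurableSpace Ω] {μ : Measure Ω} {B : Ω → ℝ}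

lemma integrable_of_abs_le [IsFiniteMeasure μ] {f : Ω → ℝ} (hf : Measurable f) {C : ℝ}
    (h : ∀ ω, |f ω| ≤ C) : Integrable f μ :=
  .of_bound hf.aestronglyMeasurable C (ae_of_all _ h)

lemma abs_le_one_of_eq_zero_or_eq_one {x : ℝ} (hx : x = 0 ∨ x = 1) : |x| ≤ 1 := by
  rcases hx with rfl | rfl <;> simp

lemma integral_centered_mul_affine_of_indepFun (hB : Measurable B)
    (hB01 : ∀ ω, B ω = 0 ∨ B ω = 1) {X Y : Ω → ℝ} (hX : Integrable X μ) (hY : Integrable Y μ)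
    (hBX : IndepFun B X μ) (hBY : IndepFun B Y μ) :
    ∫ ω, (B ω - ∫ x, B x ∂μ) * (X ω * B ω + Y ω) ∂μ
      = (∫ x, B x ∂μ) * (1 - ∫ x, B x ∂μ) * ∫ ω, X ω ∂μ := by
  set b := ∫ x, B x ∂μ
  have hB_bound : ∀ᵐ ω ∂μ, ‖B ω‖ ≤ 1 :=
    ae_of_all _ fun ω => abs_le_one_of_eq_zero_or_eq_one (hB01 ω)
  have hBX_int : Integrable (fun ω => B ω * X ω) μ := hX.bdd_mul hB.aestronglyMeasurable hB_bound
  have hBY_int : Integrable (fun ω => B ω * Y ω) μ := hY.bdd_mul hB.aestronglyMeasurable hB_bound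
  have hR_int : Integrable (fun ω => B ω * Y ω - b * Y ω) μ := hBY_int.sub (hY.const_mul b)
  have hBX_eq : ∫ ω, B ω * X ω ∂μ = b * ∫ ω, X ω ∂μ :=
    hBX.integral_fun_mul_eq_mul_integral hB.aestronglyMeasurable hX.aestronglyMeasurable
  have hBY_eq : ∫ ω, B ω * Y ω ∂μ = b * ∫ ω, Y ω ∂μ :=
    hBY.integral_fun_mul_eq_mul_integral hB.aestronglyMeasurable hY.aestronglyMeasurable
  have h_integrand : ∀ ω, (B ω - b) * (X ω * B ω + Y ω)
      = (1 - b) * (B ω * X ω) + (B ω * Y ω - b * Y ω) := fun ω => by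
    rcases hB01 ω with h | h <;> simp only [h] <;> ring
  simp_rw [h_integrand]
  rw [integral_add (hBX_int.const_mul _) hR_int, integral_const_mul,
    integral_sub hBY_int (hY.const_mul b), integral_const_mul, hBX_eq, hBY_eq]
  ring

lemma integral_centered_mul_treatment_mul_comp [IsFiniteMeasure μ] {𝒱 : Type*}
    [MeasurableSpace 𝒱] {V : Ω → 𝒱} {A : Ω → ℝ} (hV : Measurable V) (hA : Integrable A μ)
    (hB : Measurable B) (hB01 : ∀ ω, B ω = 0 ∨ B ω = 1)
    {αz αu : 𝒱 → ℝ} (hαzm : Measurable αz) (hαum : Measurable αu)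
    (hαz : Integrable (fun ω => αz (V ω)) μ) (hαu : Integrable (fun ω => αu (V ω)) μ)
    (htreat : μ[A | MeasurableSpace.comap (fun ω => (B ω, V ω)) inferInstance]
        =ᵐ[μ] fun ω => αz (V ω) * B ω + αu (V ω))
    (hindep : IndepFun B V μ) {k : 𝒱 → ℝ} (hk : Measurable k) (hkb : ∃ C, ∀ x, |k x| ≤ C) :
    ∫ ω, (B ω - ∫ x, B x ∂μ) * A ω * k (V ω) ∂μ
      = (∫ x, B x ∂μ) * (1 - ∫ x, B x ∂μ) * ∫ ω, αz (V ω) * k (V ω) ∂μ := by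
  set b := ∫ x, B x ∂μ
  obtain ⟨Ck, hCk⟩ := hkb
  have hk_bound : ∀ᵐ ω ∂μ, ‖k (V ω)‖ ≤ Ck := ae_of_all _ fun ω => hCk (V ω)
  set g : Ω → ℝ := fun ω => (B ω - b) * k (V ω)
  have hgA_int : Integrable (g * A) μ := by
    have hkA : Integrable (fun ω => k (V ω) * A ω) μ :=
      hA.bdd_mul (hk.comp hV).aestronglyMeasurable hk_bound
    refine (hkA.bdd_mul (c := 1 + |b|) (hB.sub_const b).aestronglyMeasurable
      (ae_of_all _ fun ω => ?_)).congr (ae_of_all _ fun ω => ?_)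
    · exact (norm_sub_le _ _).trans
        (add_le_add_left (abs_le_one_of_eq_zero_or_eq_one (hB01 ω)) _)
    · simp only [g, Pi.mul_apply]; ring
  have hg_meas : StronglyMeasurable[MeasurableSpace.comap (fun ω => (B ω, V ω)) inferInstance] g :=
    (((measurable_fst.sub_const b).mul (hk.comp measurable_snd)).comp
      (Measurable.of_comap_le le_rfl)).stronglyMeasurable
  have hαk_int : ∀ {α : 𝒱 → ℝ}, Integrable (fun ω => α (V ω)) μ →
      Integrable (fun ω => α (V ω) * k (V ω)) μ := fun hα =>
    hα.mul_bdd (hk.comp hV).aestronglyMeasurable hk_bound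
  have hαk_indep : ∀ {α : 𝒱 → ℝ}, Measurable α → IndepFun B (fun ω => α (V ω) * k (V ω)) μ :=
    fun hα => hindep.comp measurable_id (hα.mul hk)
  calc ∫ ω, (B ω - b) * A ω * k (V ω) ∂μ = ∫ ω, g ω * A ω ∂μ := by
        congr 1; ext ω; simp only [g]; ring
    _ = ∫ ω, g ω * μ[A | MeasurableSpace.comap (fun ω => (B ω, V ω)) inferInstance] ω ∂μ :=
        (integral_mul_condExp_of_stronglyMeasurable_s10 (hB.prodMk hV).comap_le hg_meas
          hgA_int hA).symm
    _ = ∫ ω, (B ω - b) * ((αz (V ω) * k (V ω)) * B ω + αu (V ω) * k (V ω)) ∂μ := by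
        refine integral_congr_ae (htreat.mono fun ω hω => ?_)
        simp only [g, hω]; ring
    _ = b * (1 - b) * ∫ ω, αz (V ω) * k (V ω) ∂μ :=
        integral_centered_mul_affine_of_indepFun hB hB01 (hαk_int hαz) (hαk_int hαu)
          (hαk_indep hαzm) (hαk_indep hαum)

end BinaryInstrument

theorem marginal_main_effect_step_general
    {Ω 𝒱 : Type*} [MeasurableSpace Ω] [MeasurableSpace 𝒱]
    (μ : Measure Ω) [IsProbabilityMeasure μ]
    (V : Ω → 𝒱) (A B : Ω → ℝ)
    (hV : Measurable V) (hA : Measurable A) (hB : Measurable B)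
    (hA01 : ∀ ω, A ω = 0 ∨ A ω = 1) (hB01 : ∀ ω, B ω = 0 ∨ B ω = 1)
    (αz αu : 𝒱 → ℝ) (hαzm : Measurable αz) (hαum : Measurable αu)
    (hαzb : ∃ C, ∀ x, |αz x| ≤ C) (hαub : ∃ C, ∀ x, |αu x| ≤ C)
    (htreat : μ[A | MeasurableSpace.comap (fun ω => (B ω, V ω)) inferInstance]
        =ᵐ[μ] fun ω => αz (V ω) * B ω + αu (V ω))
    (hindep : IndepFun B V μ)
    (ϑa : 𝒱 → ℝ) (hϑam : Measurable ϑa) (hϑab : ∃ C, ∀ x, |ϑa x| ≤ C)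
    (horth1 : covE μ (fun x => ϑa (V x)) (fun x => αz (V x)) = 0) :
    (∫ ω, (B ω - ∫ x, B x ∂μ) * A ω * ϑa (V ω) ∂μ)
      = (∫ ω, (B ω - ∫ x, B x ∂μ) * A ω ∂μ) * (∫ ω, ϑa (V ω) ∂μ) := by
  obtain ⟨Cz, hCz⟩ := hαzb
  obtain ⟨Cu, hCu⟩ := hαub
  have hA_int : Integrable A μ :=
    integrable_of_abs_le hA fun ω => abs_le_one_of_eq_zero_or_eq_one (hA01 ω)
  have hαz : Integrable (fun ω => αz (V ω)) μ := integrable_of_abs_le (hαzm.comp hV) (hCz <| V ·)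
  have hαu : Integrable (fun ω => αu (V ω)) μ := integrable_of_abs_le (hαum.comp hV) (hCu <| V ·)
  have h_ϑa := integral_centered_mul_treatment_mul_comp hV hA_int hB hB01 hαzm hαum hαz hαu
    htreat hindep hϑam hϑab
  have h_one := integral_centered_mul_treatment_mul_comp hV hA_int hB hB01 hαzm hαum hαz hαu
    htreat hindep (k := fun _ => 1) measurable_const ⟨1, fun _ => by simp⟩
  simp only [mul_one] at h_one
  have h_cov : ∫ ω, αz (V ω) * ϑa (V ω) ∂μ = (∫ ω, ϑa (V ω) ∂μ) * ∫ ω, αz (V ω) ∂μ := by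
    simp_rw [mul_comm (αz _)]
    exact sub_eq_zero.mp horth1
  rw [h_ϑa, h_one, h_cov]
  ring

/-- Marginal main-effect step (used in the proof of Lemma 5):
`E[(B − E[B])·A·ϑ_a(V)] = E[(B − E[B])·A]·E[ϑ_a(V)]`. -/
theorem marginal_main_effect_step
    {Ω 𝒱 : Type*} [MeasurableSpace Ω] [MeasurableSpace 𝒱]
    (μ : Measure Ω) [IsProbabilityMeasure μ]
    (V : Ω → 𝒱) (A B : Ω → ℝ)
    (hV : Measurable V) (hA : Measurable A) (hB : Measurable B)
    (hA01 : ∀ ω, A ω = 0 ∨ A ω = 1) (hB01 : ∀ ω, B ω = 0 ∨ B ω = 1)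
    (αz αu : 𝒱 → ℝ) (hαzm : Measurable αz) (hαum : Measurable αu)
    (hαzb : ∃ C, ∀ x, |αz x| ≤ C) (hαub : ∃ C, ∀ x, |αu x| ≤ C)
    (htreat : μ[A | MeasurableSpace.comap (fun ω => (B ω, V ω)) inferInstance]
        =ᵐ[μ] fun ω => αz (V ω) * B ω + αu (V ω))
    (hindep : IndepFun B V μ)
    (ϑa : 𝒱 → ℝ) (hϑam : Measurable ϑa) (hϑab : ∃ C, ∀ x, |ϑa x| ≤ C)
    (horth1 : covE μ (fun x => ϑa (V x)) (fun x => αz (V x)) = 0)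
    (horth2 : covE μ (fun x => ϑa (V x)) (fun x => αu (V x)) = 0) :
    (∫ ω, (B ω - ∫ x, B x ∂μ) * A ω * ϑa (V ω) ∂μ)
      = (∫ ω, (B ω - ∫ x, B x ∂μ) * A ω ∂μ) * (∫ ω, ϑa (V ω) ∂μ) :=
  marginal_main_effect_step_general μ V A B hV hA hB hA01 hB01 αz αu hαzm hαum hαzb hαub htreat
    hindep ϑa hϑam hϑab horth1
end

section
/- Marginal interaction-effect step (used in the proof of Lemma 5): under the treatment model, IV independence, and the orthogonality conditions Cov(ϑ_az(V), α_z(V)) = 0 and Cov(ϑ_az(V), α_u(V)) = 0, it holds that E[(B − E[B])·A·B·ϑ_az(V)] = E[(B − E[B])·A·B]·E[ϑ_az(V)]. -/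
/-!
Conditioning on `(B, V)` replaces `A` by `α_z(V)·B + α_u(V)`. Since `B² = B`, the weight
`(B - E B)·B` equals `(1 - E B)·B`, and independence of `B` and `V` then gives
`E[(B - E B)·A·B·φ(V)] = (1 - E B)·E B·E[φ(V)·(α_z(V) + α_u(V))]` for every bounded `φ`.
Taking `φ = ϑ_az` and `φ = 1`, the claim reduces to
`E[ϑ_az(V)·(α_z(V) + α_u(V))] = E[ϑ_az(V)]·E[α_z(V) + α_u(V)]`, which is the sum of the two
orthogonality conditions.
-/

open MeasureTheory ProbabilityTheory

lemma covE_add_right {Ω : Type*} [MeasurableSpace Ω] {μ : Measure Ω} {X Y Z : Ω → ℝ}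
    (hXY : Integrable (fun ω => X ω * Y ω) μ) (hXZ : Integrable (fun ω => X ω * Z ω) μ)
    (hY : Integrable Y μ) (hZ : Integrable Z μ) :
    covE μ X (fun ω => Y ω + Z ω) = covE μ X Y + covE μ X Z := by
  simp only [covE, mul_add, integral_add hXY hXZ, integral_add hY hZ]
  ring

lemma integral_mul_eq_of_condExp_ae_eq {Ω : Type*} {m mΩ : MeasurableSpace Ω} (hm : m ≤ mΩ)
    {μ : Measure Ω} [IsFiniteMeasure μ] {f g h : Ω → ℝ} (hg : StronglyMeasurable[m] g) (c : ℝ)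
    (hgc : ∀ᵐ ω ∂μ, ‖g ω‖ ≤ c) (hf : Integrable f μ) (hfh : μ[f | m] =ᵐ[μ] h) :
    ∫ ω, g ω * f ω ∂μ = ∫ ω, g ω * h ω ∂μ := by
  have := isFiniteMeasure_trim (μ := μ) hm
  calc ∫ ω, g ω * f ω ∂μ = ∫ ω, μ[g * f | m] ω ∂μ := (integral_condExp hm).symm
    _ = ∫ ω, g ω * h ω ∂μ := by
      refine integral_congr_ae ?_
      filter_upwards [condExp_stronglyMeasurable_mul_of_bound hm hg hf c hgc, hfh]
        with ω hmul hω
      rw [hmul, Pi.mul_apply, hω]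

section TreatmentModel

variable {Ω 𝒱 : Type*} [MeasurableSpace Ω] [MeasurableSpace 𝒱] {μ : Measure Ω}
  [IsFiniteMeasure μ] {V : Ω → 𝒱} {A B : Ω → ℝ} {αz αu : 𝒱 → ℝ}

theorem integral_centered_instrument_mul_treatment (hV : Measurable V) (hA : Integrable A μ)
    (hB : Measurable B) (hB01 : ∀ ω, B ω = 0 ∨ B ω = 1)
    (hαz : Measurable αz) (hαu : Measurable αu)
    (htreat : μ[A | MeasurableSpace.comap (fun ω => (B ω, V ω)) inferInstance]
        =ᵐ[μ] fun ω => αz (V ω) * B ω + αu (V ω))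
    (hindep : IndepFun B V μ) (φ : 𝒱 → ℝ) (hφ : Measurable φ) {C : ℝ} (hφC : ∀ x, |φ x| ≤ C) :
    ∫ ω, (B ω - ∫ x, B x ∂μ) * A ω * B ω * φ (V ω) ∂μ
      = (1 - ∫ x, B x ∂μ) * (∫ x, B x ∂μ) * ∫ ω, φ (V ω) * (αz (V ω) + αu (V ω)) ∂μ := by
  set b := ∫ x, B x ∂μ
  have hBB : ∀ ω, B ω * B ω = B ω := fun ω => by rcases hB01 ω with h | h <;> simp [h]
  have hB1 : ∀ ω, |B ω| ≤ 1 := fun ω => by rcases hB01 ω with h | h <;> simp [h]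
  -- With `B² = B` the weight becomes a bounded function of `(B, V)`, which conditioning pulls out.
  have hweight : ∀ ω, (B ω - b) * A ω * B ω * φ (V ω) = (1 - b) * B ω * φ (V ω) * A ω :=
    fun ω => by linear_combination A ω * φ (V ω) * hBB ω
  have hg : StronglyMeasurable[MeasurableSpace.comap (fun ω => (B ω, V ω)) inferInstance]
      (fun ω => (1 - b) * B ω * φ (V ω)) :=
    (((measurable_const.mul measurable_fst).mul (hφ.comp measurable_snd)).comp
      (comap_measurable _)).stronglyMeasurable
  have hgC : ∀ ω, ‖(1 - b) * B ω * φ (V ω)‖ ≤ |1 - b| * 1 * C := fun ω => by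
    rw [Real.norm_eq_abs, abs_mul, abs_mul]
    exact mul_le_mul (mul_le_mul_of_nonneg_left (hB1 ω) (abs_nonneg _)) (hφC _) (abs_nonneg _)
      (by positivity)
  have hψ : Measurable fun x => φ x * (αz x + αu x) := hφ.mul (hαz.add hαu)
  have hindep_ψ : ∫ ω, B ω * (φ (V ω) * (αz (V ω) + αu (V ω))) ∂μ
      = b * ∫ ω, φ (V ω) * (αz (V ω) + αu (V ω)) ∂μ :=
    (hindep.comp measurable_id hψ).integral_fun_mul_eq_mul_integral
      hB.aestronglyMeasurable (hψ.comp hV).aestronglyMeasurable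
  calc ∫ ω, (B ω - b) * A ω * B ω * φ (V ω) ∂μ
      = ∫ ω, (1 - b) * B ω * φ (V ω) * (αz (V ω) * B ω + αu (V ω)) ∂μ := by
        simp_rw [hweight]
        exact integral_mul_eq_of_condExp_ae_eq (hB.prodMk hV).comap_le hg _
          (ae_of_all _ hgC) hA htreat
    _ = ∫ ω, (1 - b) * (B ω * (φ (V ω) * (αz (V ω) + αu (V ω)))) ∂μ := by
        congr 1 with ω
        linear_combination φ (V ω) * αz (V ω) * (1 - b) * hBB ω
    _ = (1 - b) * b * ∫ ω, φ (V ω) * (αz (V ω) + αu (V ω)) ∂μ := by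
        rw [integral_const_mul, hindep_ψ, mul_assoc]

end TreatmentModel

/-- Marginal interaction-effect step (used in the proof of Lemma 5):
`E[(B − E[B])·A·B·ϑ_az(V)] = E[(B − E[B])·A·B]·E[ϑ_az(V)]`. -/
theorem marginal_interaction_effect_step
    {Ω 𝒱 : Type*} [MeasurableSpace Ω] [MeasurableSpace 𝒱]
    (μ : Measure Ω) [IsProbabilityMeasure μ]
    (V : Ω → 𝒱) (A B : Ω → ℝ)
    (hV : Measurable V) (hA : Measurable A) (hB : Measurable B)
    (hA01 : ∀ ω, A ω = 0 ∨ A ω = 1) (hB01 : ∀ ω, B ω = 0 ∨ B ω = 1)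
    (αz αu : 𝒱 → ℝ) (hαzm : Measurable αz) (hαum : Measurable αu)
    (hαzb : ∃ C, ∀ x, |αz x| ≤ C) (hαub : ∃ C, ∀ x, |αu x| ≤ C)
    (htreat : μ[A | MeasurableSpace.comap (fun ω => (B ω, V ω)) inferInstance]
        =ᵐ[μ] fun ω => αz (V ω) * B ω + αu (V ω))
    (hindep : IndepFun B V μ)
    (ϑaz : 𝒱 → ℝ) (hϑazm : Measurable ϑaz) (hϑazb : ∃ C, ∀ x, |ϑaz x| ≤ C)
    (horth1 : covE μ (fun x => ϑaz (V x)) (fun x => αz (V x)) = 0)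
    (horth2 : covE μ (fun x => ϑaz (V x)) (fun x => αu (V x)) = 0) :
    (∫ ω, (B ω - ∫ x, B x ∂μ) * A ω * B ω * ϑaz (V ω) ∂μ)
      = (∫ ω, (B ω - ∫ x, B x ∂μ) * A ω * B ω ∂μ) * (∫ ω, ϑaz (V ω) ∂μ) := by
  obtain ⟨Cz, hCz⟩ := hαzb
  obtain ⟨Cu, hCu⟩ := hαub
  obtain ⟨Cϑ, hCϑ⟩ := hϑazb
  have hA_int : Integrable A μ := .of_bound hA.aestronglyMeasurable 1
    (ae_of_all _ fun ω => by rcases hA01 ω with h | h <;> simp [h])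
  have hαz_int : Integrable (fun ω => αz (V ω)) μ :=
    .of_bound (hαzm.comp hV).aestronglyMeasurable Cz (ae_of_all _ fun ω => hCz (V ω))
  have hαu_int : Integrable (fun ω => αu (V ω)) μ :=
    .of_bound (hαum.comp hV).aestronglyMeasurable Cu (ae_of_all _ fun ω => hCu (V ω))
  have hϑ_meas := (hϑazm.comp hV).aestronglyMeasurable (μ := μ)
  have hϑ_bound : ∀ᵐ ω ∂μ, ‖ϑaz (V ω)‖ ≤ Cϑ := ae_of_all _ fun ω => hCϑ (V ω)
  have horth : covE μ (fun ω => ϑaz (V ω)) (fun ω => αz (V ω) + αu (V ω)) = 0 := by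
    rw [covE_add_right (X := fun ω => ϑaz (V ω)) (hαz_int.bdd_mul hϑ_meas hϑ_bound)
      (hαu_int.bdd_mul hϑ_meas hϑ_bound) hαz_int hαu_int, horth1, horth2, add_zero]
  have key := integral_centered_instrument_mul_treatment hV hA_int hB hB01 hαzm hαum htreat hindep
  have key_one := key (fun _ => 1) measurable_const (C := 1) (fun _ => by simp)
  simp only [mul_one, one_mul] at key_one
  rw [key ϑaz hϑazm hCϑ, key_one, sub_eq_zero.mp horth]
  ring
end
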